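/- arXiv:0904.2108 — 4 statements merged into one kernel-verified Lean document; each statement's English description precedes it below -/
import Mathlib

section
/- Let d ≥ 1 and let λ_1, ..., λ_d be positive integers with λ_j ≥ 2 for all j. Let T = conv(0, λ_1 e_1, ..., λ_d e_d) ⊆ ℝ^d. If T is a maximal lattice-free simplex (no integer point in its interior, and every facet contains an integer point in its relative interior), then 1 = 1/λ_1 + ... + 1/λ_d. -/
/-!
The open region `{x > 0, ∑ x_j / λ_j < 1}` lies inside `T`, so lattice-freeness keeps the
all-ones point out of it, i.e. `∑ 1 / λ_j ≥ 1`. Conversely, the facet opposite `0` lies in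
the nonnegative orthant and in the hyperplane `∑ x_j / λ_j = 1`; a point of its relative
interior has all coordinates positive, so an integral one has all coordinates `≥ 1`, whence
`∑ 1 / λ_j ≤ 1`.
-/

open Set

section IntrinsicInterior

variable {E : Type*} [AddCommGroup E] [Module ℝ E] [TopologicalSpace E]
  [IsTopologicalAddGroup E] [ContinuousSMul ℝ E] {s : Set E} {x q : E}

theorem exists_pos_add_smul_sub_mem_of_mem_intrinsicInterior
    (hx : x ∈ intrinsicInterior ℝ s) (hq : q ∈ s) :
    ∃ t : ℝ, 0 < t ∧ x + t • (x - q) ∈ s := by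
  obtain ⟨y, hy, rfl⟩ := mem_intrinsicInterior.mp hx
  have hqA : q ∈ affineSpan ℝ s := subset_affineSpan ℝ s hq
  let path : ℝ → affineSpan ℝ s := fun t =>
    ⟨AffineMap.lineMap q (y : E) (1 + t), AffineMap.lineMap_mem _ hqA y.2⟩
  have hpath : Continuous path :=
    (AffineMap.lineMap_continuous.comp (continuous_const.add continuous_id)).subtype_mk _
  have hpath0 : path 0 = y := by ext; simp [path]
  have hev : ∀ᶠ t in nhdsWithin (0 : ℝ) (Ioi 0), path t ∈ interior ((↑) ⁻¹' s) :=
    nhdsWithin_le_nhds (hpath.continuousAt.preimage_mem_nhds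
      (hpath0 ▸ isOpen_interior.mem_nhds hy))
  obtain ⟨t, ht, ht0⟩ := (hev.and self_mem_nhdsWithin).exists
  refine ⟨t, ht0, ?_⟩
  have hpath_t : ((path t : affineSpan ℝ s) : E) = y + t • ((y : E) - q) := by
    simp only [path, AffineMap.lineMap_apply, vsub_eq_sub, vadd_eq_add, add_smul, one_smul]
    abel
  have hmem : path t ∈ (↑) ⁻¹' s := interior_subset ht
  rwa [mem_preimage, hpath_t] at hmem

theorem LinearMap.pos_of_mem_intrinsicInterior {f : E →ₗ[ℝ] ℝ} (hf : ∀ y ∈ s, 0 ≤ f y)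
    (hx : x ∈ intrinsicInterior ℝ s) (hq : q ∈ s) (hfq : 0 < f q) : 0 < f x := by
  obtain ⟨t, ht, hmem⟩ := exists_pos_add_smul_sub_mem_of_mem_intrinsicInterior hx hq
  have hfx := hf x (intrinsicInterior_subset hx)
  have := hf _ hmem
  rw [map_add, map_smul, map_sub, smul_eq_mul] at this
  nlinarith

end IntrinsicInterior

section CornerSimplex

variable {d : ℕ} {μ : Fin d → ℝ} {v : Fin (d + 1) → Fin d → ℝ}

theorem mem_convexHull_of_nonneg_of_sum_div_le_one (hμ : ∀ j, 0 < μ j) (hv0 : v 0 = 0)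
    (hv : ∀ j, v j.succ = Pi.single j (μ j)) {x : Fin d → ℝ} (hx : 0 ≤ x)
    (hsum : ∑ j, x j / μ j ≤ 1) : x ∈ convexHull ℝ (range v) := by
  let w : Fin (d + 1) → ℝ := Fin.cons (1 - ∑ j, x j / μ j) fun j => x j / μ j
  have hw0 : ∀ k, 0 ≤ w k :=
    Fin.cases (by simpa [w]) fun j => div_nonneg (hx j) (hμ j).le
  have hw1 : ∑ k, w k = 1 := by simp [w, Fin.sum_univ_succ]
  have hwx : ∑ k, w k • v k = x := by
    ext i
    simp [w, Fin.sum_univ_succ, hv0, hv, Finset.sum_apply, Pi.single_apply, (hμ i).ne']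
  exact hwx ▸ (convex_convexHull ℝ _).sum_mem (fun k _ => hw0 k) hw1
    fun k _ => subset_convexHull ℝ _ (mem_range_self k)

theorem setOf_pos_sum_div_lt_one_subset_interior_convexHull (hμ : ∀ j, 0 < μ j) (hv0 : v 0 = 0)
    (hv : ∀ j, v j.succ = Pi.single j (μ j)) :
    {x | (∀ j, 0 < x j) ∧ ∑ j, x j / μ j < 1} ⊆ interior (convexHull ℝ (range v)) := by
  have hopen : IsOpen {x : Fin d → ℝ | (∀ j, 0 < x j) ∧ ∑ j, x j / μ j < 1} := by
    simp only [ofPred_and, ofPred_forall]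
    exact (isOpen_iInter_of_finite fun j => isOpen_lt continuous_const (continuous_apply j)).inter
      (isOpen_lt (by fun_prop) continuous_const)
  exact hopen.subset_interior_iff.mpr fun x hx =>
    mem_convexHull_of_nonneg_of_sum_div_le_one hμ hv0 hv (fun j => (hx.1 j).le) hx.2.le

theorem image_compl_zero_eq_range_single (hv : ∀ j, v j.succ = Pi.single j (μ j)) :
    v '' {0}ᶜ = range fun j => Pi.single j (μ j) := by
  rw [← Fin.range_succ, ← range_comp]
  exact congrArg range (funext hv)

theorem convexHull_range_single_subset (hμ : ∀ j, 0 < μ j) :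
    convexHull ℝ (range fun j => Pi.single j (μ j)) ⊆
      {y | 0 ≤ y ∧ ∑ j, y j / μ j = 1} := by
  have hlin : IsLinearMap ℝ fun y : Fin d → ℝ => ∑ j, y j / μ j :=
    ⟨fun a b => by simp [add_div, Finset.sum_add_distrib],
      fun c a => by simp [mul_div_assoc, Finset.mul_sum]⟩
  refine convexHull_min ?_ ((convex_Ici 0).inter (convex_hyperplane hlin 1))
  rintro _ ⟨j, rfl⟩
  refine ⟨Pi.single_nonneg.mpr (hμ j).le, ?_⟩
  simp [Pi.single_apply, ite_div, (hμ j).ne']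

theorem sum_one_div_le_one_of_integral_mem_intrinsicInterior (hμ : ∀ j, 0 < μ j)
    {x : Fin d → ℝ}
    (hx : x ∈ intrinsicInterior ℝ (convexHull ℝ (range fun j => Pi.single j (μ j))))
    (hxℤ : ∀ i, ∃ z : ℤ, x i = z) : ∑ j, 1 / μ j ≤ 1 := by
  have hF := convexHull_range_single_subset hμ
  obtain ⟨-, hx1⟩ := hF (intrinsicInterior_subset hx)
  have hpos : ∀ i, 0 < x i := fun i =>
    (LinearMap.proj i).pos_of_mem_intrinsicInterior (fun y hy => (hF hy).1 i) hx
      (subset_convexHull ℝ _ (mem_range_self i)) (by simpa using hμ i)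
  have hone : ∀ i, 1 ≤ x i := fun i => by
    obtain ⟨z, hz⟩ := hxℤ i
    have hz0 : 0 < z := by exact_mod_cast hz ▸ hpos i
    rw [hz]
    exact_mod_cast hz0
  calc ∑ j, 1 / μ j ≤ ∑ j, x j / μ j :=
        Finset.sum_le_sum fun j _ => div_le_div_of_nonneg_right (hone j) (hμ j).le
    _ = 1 := hx1

theorem one_le_sum_one_div_of_one_notMem_interior (hμ : ∀ j, 0 < μ j) (hv0 : v 0 = 0)
    (hv : ∀ j, v j.succ = Pi.single j (μ j))
    (h : (fun _ => (1 : ℝ)) ∉ interior (convexHull ℝ (range v))) : 1 ≤ ∑ j, 1 / μ j := by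
  by_contra! hlt
  exact h (setOf_pos_sum_div_lt_one_subset_interior_convexHull hμ hv0 hv
    ⟨fun _ => one_pos, by simpa using hlt⟩)

end CornerSimplex

theorem stmt0_general (d : ℕ) (lam : Fin d → ℤ) (hlam : ∀ j, 2 ≤ lam j)
    (v : Fin (d + 1) → (Fin d → ℝ))
    (hv0 : v 0 = 0)
    (hv : ∀ j : Fin d, v j.succ = Pi.single j ((lam j : ℝ)))
    (T : Set (Fin d → ℝ)) (hT : T = convexHull ℝ (Set.range v))
    (hfree : ∀ x ∈ interior T, ¬ ∀ i, ∃ z : ℤ, x i = z)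
    (hfacet : ∀ k : Fin (d + 1),
      ∃ x ∈ intrinsicInterior ℝ (convexHull ℝ (v '' {k}ᶜ)), ∀ i, ∃ z : ℤ, x i = z) :
    ∑ j, (1 : ℝ) / (lam j) = 1 := by
  have hlam_pos : ∀ j, (0 : ℝ) < lam j := fun j => by exact_mod_cast (hlam j).trans_lt' two_pos
  obtain ⟨x, hx, hxℤ⟩ := hfacet 0
  rw [image_compl_zero_eq_range_single hv] at hx
  refine le_antisymm (sum_one_div_le_one_of_integral_mem_intrinsicInterior hlam_pos hx hxℤ) ?_
  exact one_le_sum_one_div_of_one_notMem_interior hlam_pos hv0 hv fun h =>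
    hfree _ (hT ▸ h) fun _ => ⟨1, Int.cast_one.symm⟩

/-- If `T = conv(0, λ₁e₁, …, λ_d e_d)` with all `λ_j ≥ 2` is a maximal
lattice-free simplex (no integer point in its interior, and every facet contains an
integer point in its relative interior), then `∑ 1/λ_j = 1`. -/
theorem stmt0 (d : ℕ) (hd : 1 ≤ d) (lam : Fin d → ℤ) (hlam : ∀ j, 2 ≤ lam j)
    (v : Fin (d + 1) → (Fin d → ℝ))
    (hv0 : v 0 = 0)
    (hv : ∀ j : Fin d, v j.succ = Pi.single j ((lam j : ℝ)))
    (T : Set (Fin d → ℝ)) (hT : T = convexHull ℝ (Set.range v))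
    (hfree : ∀ x ∈ interior T, ¬ ∀ i, ∃ z : ℤ, x i = z)
    (hfacet : ∀ k : Fin (d + 1),
      ∃ x ∈ intrinsicInterior ℝ (convexHull ℝ (v '' {k}ᶜ)), ∀ i, ∃ z : ℤ, x i = z) :
    ∑ j, (1 : ℝ) / (lam j) = 1 :=
  stmt0_general d lam hlam v hv0 hv T hT hfree hfacet
end

section
/- Let T = conv(0, 2e_1, 3e_2, 7e_3, 43e_4, 1806e_5) ⊆ ℝ^5. Then T contains no integer point in its interior. -/
/-!
Every point of the simplex `conv(0, a₁e₁, …, aₙeₙ)` satisfies `y ≥ 0` and `∑ yᵢ / aᵢ ≤ 1`, and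
nudging an interior point along `∓(1, …, 1)` shows that both inequalities are strict there.
An interior integer point therefore has all coordinates `≥ 1`, forcing `∑ 1 / aᵢ < 1`.
For the Sylvester numbers `2, 3, 7, 43, 1806` this fails: `1/2 + 1/3 + 1/7 + 1/43 + 1/1806 = 1`.
-/

open Set

section

variable {ι : Type*} [Fintype ι]

def cornerSimplex (a : ι → ℝ) : Set (ι → ℝ) :=
  {y | (∀ i, 0 ≤ y i) ∧ ∑ i, y i / a i ≤ 1}

theorem convex_cornerSimplex (a : ι → ℝ) : Convex ℝ (cornerSimplex a) := by
  have hlin : IsLinearMap ℝ fun y : ι → ℝ => ∑ i, y i / a i :=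
    ⟨fun y z => by simp only [Pi.add_apply, add_div, Finset.sum_add_distrib],
     fun c y => by simp only [Pi.smul_apply, smul_eq_mul, mul_div_assoc, Finset.mul_sum]⟩
  exact (convex_Ici (0 : ι → ℝ)).inter (convex_halfSpace_le hlin 1)

theorem convexHull_subset_cornerSimplex [DecidableEq ι] {a : ι → ℝ} (ha : ∀ i, 0 < a i) :
    convexHull ℝ (insert 0 (range fun i => Pi.single i (a i))) ⊆ cornerSimplex a := by
  refine convexHull_min ?_ (convex_cornerSimplex a)
  rintro _ (rfl | ⟨i, rfl⟩)
  · simp [cornerSimplex]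
  · refine ⟨fun j => ?_, ?_⟩
    · rcases eq_or_ne j i with rfl | hji
      · simpa using (ha j).le
      · simp [hji]
    · simp [Pi.single_apply, ite_div, (ha i).ne']

theorem exists_pos_add_smul_mem_of_mem_interior {E : Type*} [TopologicalSpace E]
    [AddCommGroup E] [Module ℝ E] [ContinuousAdd E] [ContinuousSMul ℝ E] {s : Set E} {x : E}
    (hx : x ∈ interior s) (v : E) : ∃ t : ℝ, 0 < t ∧ x + t • v ∈ s := by
  have hcont : Continuous fun t : ℝ => x + t • v := by fun_prop
  have hnear : ∀ᶠ t in nhdsWithin (0 : ℝ) (Ioi 0), x + t • v ∈ s :=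
    ((hcont.tendsto' 0 x (by simp)).mono_left nhdsWithin_le_nhds).eventually
      (mem_interior_iff_mem_nhds.1 hx)
  exact (eventually_mem_nhdsWithin.and hnear).exists

theorem pos_and_sum_lt_of_mem_interior_cornerSimplex {a : ι → ℝ} (hsum : 0 < ∑ i, (a i)⁻¹)
    {x : ι → ℝ} (hx : x ∈ interior (cornerSimplex a)) :
    (∀ i, 0 < x i) ∧ ∑ i, x i / a i < 1 := by
  obtain ⟨t, ht, hxt⟩ := exists_pos_add_smul_mem_of_mem_interior hx (-1)
  obtain ⟨u, hu, hxu⟩ := exists_pos_add_smul_mem_of_mem_interior hx 1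
  refine ⟨fun i => ?_, ?_⟩
  · have : t ≤ x i := by simpa using hxt.1 i
    linarith
  · calc ∑ i, x i / a i < ∑ i, x i / a i + u * ∑ i, (a i)⁻¹ := by simpa using mul_pos hu hsum
      _ = ∑ i, (x + u • 1) i / a i := by
        simp only [Finset.mul_sum, ← Finset.sum_add_distrib]
        exact Finset.sum_congr rfl fun i _ => by
          simp only [Pi.add_apply, Pi.smul_apply, Pi.one_apply, smul_eq_mul, mul_one]; ring
      _ ≤ 1 := hxu.2

theorem not_forall_int_of_mem_interior_cornerSimplex {a : ι → ℝ} (ha : ∀ i, 0 < a i)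
    (hsum : 1 ≤ ∑ i, (a i)⁻¹) {x : ι → ℝ} (hx : x ∈ interior (cornerSimplex a)) :
    ¬ ∀ i, ∃ z : ℤ, x i = z := by
  intro hint
  obtain ⟨hpos, hlt⟩ := pos_and_sum_lt_of_mem_interior_cornerSimplex (by linarith) hx
  have hone : ∀ i, 1 ≤ x i := fun i => by
    obtain ⟨z, hz⟩ := hint i
    have hz0 : (0 : ℝ) < z := hz ▸ hpos i
    rw [hz]
    exact_mod_cast Int.cast_pos.mp hz0
  have : ∑ i, (a i)⁻¹ ≤ ∑ i, x i / a i :=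
    Finset.sum_le_sum fun i _ => by simpa [one_div] using div_le_div_of_nonneg_right (hone i) (ha i).le
  linarith

end

/-- the simplex `T = conv(0, 2e₁, 3e₂, 7e₃, 43e₄, 1806e₅) ⊆ ℝ⁵`
contains no integer point in its interior. -/
theorem stmt6 :
    ∀ x ∈ interior (convexHull ℝ
      ({0, Pi.single 0 2, Pi.single 1 3, Pi.single 2 7, Pi.single 3 43, Pi.single 4 1806} :
        Set (Fin 5 → ℝ))),
      ¬ ∀ i, ∃ z : ℤ, x i = z := by
  intro x hx
  let a : Fin 5 → ℝ := ![2, 3, 7, 43, 1806]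
  have hvert : ({0, Pi.single 0 2, Pi.single 1 3, Pi.single 2 7, Pi.single 3 43,
      Pi.single 4 1806} : Set (Fin 5 → ℝ)) = insert 0 (range fun i => Pi.single i (a i)) := by
    simp [a, Fin.range_fin_succ, Fin.tail]
  have ha : ∀ i, 0 < a i := by simp [a, Fin.forall_fin_succ]
  have hsum : 1 ≤ ∑ i, (a i)⁻¹ := by norm_num [a, Fin.sum_univ_succ]
  rw [hvert] at hx
  exact not_forall_int_of_mem_interior_cornerSimplex ha hsum
    (interior_mono (convexHull_subset_cornerSimplex ha) hx)
end

section
/- The simplex S_1 = conv((0,0,0), (2,0,0), (0,3,0), (0,0,6)) ⊆ ℝ^3 contains no integer point in its interior, and each of its four facets contains an integer point in its relative interior. -/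
/-!
In the barycentric coordinates `λ(y) = (1 - y₀/2 - y₁/3 - y₂/6, y₀/2, y₁/3, y₂/6)` of `S₁`, the
interior of `S₁` is where all `λⱼ` are positive, and the relative interior of the facet opposite
the vertex `k` is where `λₖ = 0` and the other coordinates are positive. An integer point with
positive coordinates has `y₀, y₁, y₂ ≥ 1`, hence `λ₀ ≤ 1 - 1/2 - 1/3 - 1/6 = 0`; on the other
hand `(1,1,1)`, `(0,1,1)`, `(1,0,1)` and `(1,1,0)` lie in the relative interiors of the four
facets.
-/

open Set

theorem mem_intrinsicInterior_of_isOpen {R V P : Type*} [Ring R] [AddCommGroup V] [Module R V]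
    [TopologicalSpace P] [AddTorsor V P] {s U : Set P} {x : P} (hU : IsOpen U) (hxU : x ∈ U)
    (hxs : x ∈ s) (hUs : U ∩ affineSpan R s ⊆ s) : x ∈ intrinsicInterior R s :=
  mem_intrinsicInterior.2 ⟨⟨x, subset_affineSpan R s hxs⟩,
    interior_maximal (fun (y : affineSpan R s) (hy : (y : P) ∈ U) => hUs ⟨hy, y.2⟩)
      (hU.preimage continuous_subtype_val) hxU, rfl⟩

namespace AffineBasis

theorem coord_eq_zero_of_mem_affineSpan_image_compl {ι R V P : Type*} [Ring R] [AddCommGroup V]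
    [Module R V] [AddTorsor V P] (b : AffineBasis ι R P) {k : ι} {y : P}
    (hy : y ∈ affineSpan R (b '' {k}ᶜ)) : b.coord k y = 0 := by
  have hmem : b.coord k y ∈ affineSpan R (b.coord k '' (b '' {k}ᶜ)) := by
    rw [← AffineSubspace.map_span]
    exact AffineSubspace.mem_map.2 ⟨y, hy, rfl⟩
  have hzero : b.coord k '' (b '' {k}ᶜ) ⊆ {0} := by
    rintro _ ⟨_, ⟨j, hj, rfl⟩, rfl⟩
    exact b.coord_apply_ne (Ne.symm hj)
  exact (AffineSubspace.mem_affineSpan_singleton R R).1 (affineSpan_mono R hzero hmem)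

theorem mem_convexHull_image_compl_of_coord {ι R E : Type*} [Fintype ι] [Field R] [LinearOrder R]
    [IsStrictOrderedRing R] [AddCommGroup E] [Module R E] (b : AffineBasis ι R E) {k : ι} {y : E}
    (hk : b.coord k y = 0) (hnonneg : ∀ j ≠ k, 0 ≤ b.coord j y) :
    y ∈ convexHull R (b '' {k}ᶜ) := by
  classical
  have hsum : ∑ j ∈ Finset.univ.erase k, b.coord j y = 1 := by
    rw [Finset.sum_erase _ (f := fun j => b.coord j y) hk, b.sum_coord_apply_eq_one]
  have hcomb : ∑ j ∈ Finset.univ.erase k, b.coord j y • b j = y := by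
    rw [Finset.sum_erase _ (f := fun j => b.coord j y • b j) (by rw [hk, zero_smul]),
      b.linear_combination_coord_eq_self]
  rw [← hcomb]
  exact (convex_convexHull R _).sum_mem (fun j hj => hnonneg j (Finset.ne_of_mem_erase hj)) hsum
    fun j hj => subset_convexHull R _ ⟨j, Finset.ne_of_mem_erase hj, rfl⟩

theorem mem_intrinsicInterior_convexHull_image_compl {ι E : Type*} [Fintype ι]
    [NormedAddCommGroup E] [NormedSpace ℝ E] (b : AffineBasis ι ℝ E) {k : ι} {x : E}
    (hk : b.coord k x = 0) (hpos : ∀ j ≠ k, 0 < b.coord j x) :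
    x ∈ intrinsicInterior ℝ (convexHull ℝ (b '' {k}ᶜ)) := by
  have := b.finiteDimensional
  have hU : IsOpen {y | ∀ j ≠ k, 0 < b.coord j y} := by
    simp only [ofPred_forall]
    exact isOpen_iInter_of_finite fun j => isOpen_iInter_of_finite fun _ =>
      isOpen_lt continuous_const (continuous_barycentric_coord b j)
  refine mem_intrinsicInterior_of_isOpen hU hpos
    (b.mem_convexHull_image_compl_of_coord hk fun j hj => (hpos j hj).le) ?_
  rintro y ⟨hy, hspan⟩
  rw [affineSpan_convexHull] at hspan
  exact b.mem_convexHull_image_compl_of_coord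
    (b.coord_eq_zero_of_mem_affineSpan_image_compl hspan) fun j hj => (hy j hj).le

end AffineBasis

noncomputable section

namespace S₁

def vertices : Fin 4 → Fin 3 → ℝ := ![![0, 0, 0], ![2, 0, 0], ![0, 3, 0], ![0, 0, 6]]

def barycentric (y : Fin 3 → ℝ) : Fin 4 → ℝ :=
  ![1 - y 0 / 2 - y 1 / 3 - y 2 / 6, y 0 / 2, y 1 / 3, y 2 / 6]

theorem sum_barycentric (y : Fin 3 → ℝ) : ∑ j, barycentric y j = 1 := by
  rw [Fin.sum_univ_four]
  show 1 - y 0 / 2 - y 1 / 3 - y 2 / 6 + y 0 / 2 + y 1 / 3 + y 2 / 6 = 1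
  ring

theorem affineCombination_barycentric (y : Fin 3 → ℝ) :
    Finset.univ.affineCombination ℝ vertices (barycentric y) = y := by
  rw [Finset.affineCombination_eq_linear_combination _ _ _ (sum_barycentric y)]
  ext i
  fin_cases i <;> simp [Fin.sum_univ_four, barycentric, vertices]

theorem barycentric_affineCombination (c : Fin 4 → ℝ) (hc : ∑ j, c j = 1) :
    barycentric (Finset.univ.affineCombination ℝ vertices c) = c := by
  rw [Finset.affineCombination_eq_linear_combination _ _ _ hc]
  rw [Fin.sum_univ_four] at hc
  ext j
  fin_cases j <;> simp [Fin.sum_univ_four, barycentric, vertices]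
  linarith

theorem affineIndependent_vertices : AffineIndependent ℝ vertices :=
  (affineIndependent_iff_eq_of_fintype_affineCombination_eq ℝ vertices).2
    fun c₁ c₂ hc₁ hc₂ h => by
      rw [← barycentric_affineCombination c₁ hc₁, h, barycentric_affineCombination c₂ hc₂]

theorem affineSpan_vertices : affineSpan ℝ (range vertices) = ⊤ :=
  eq_top_iff.2 fun y _ => affineCombination_barycentric y ▸
    affineCombination_mem_affineSpan (sum_barycentric y) vertices

def basis : AffineBasis (Fin 4) ℝ (Fin 3 → ℝ) :=
  ⟨vertices, affineIndependent_vertices, affineSpan_vertices⟩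

theorem coord_basis (j : Fin 4) (y : Fin 3 → ℝ) : basis.coord j y = barycentric y j := by
  conv_lhs => rw [← affineCombination_barycentric y]
  exact basis.coord_apply_combination_of_mem (Finset.mem_univ j) (sum_barycentric y)

theorem exists_barycentric_nonpos {x : Fin 3 → ℝ} (hx : ∀ i, ∃ z : ℤ, x i = z) :
    ∃ j, barycentric x j ≤ 0 := by
  have one_le_of_pos (i : Fin 3) (hi : 0 < x i) : 1 ≤ x i := by
    obtain ⟨z, hz⟩ := hx i
    rw [hz] at hi ⊢
    exact_mod_cast Int.cast_pos.1 hi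
  by_contra! hpos
  have h₀ : 0 < 1 - x 0 / 2 - x 1 / 3 - x 2 / 6 := hpos 0
  have h₁ : 0 < x 0 / 2 := hpos 1
  have h₂ : 0 < x 1 / 3 := hpos 2
  have h₃ : 0 < x 2 / 6 := hpos 3
  linarith [one_le_of_pos 0 (by linarith), one_le_of_pos 1 (by linarith),
    one_le_of_pos 2 (by linarith)]

def facetPoint : Fin 4 → Fin 3 → ℤ := ![![1, 1, 1], ![0, 1, 1], ![1, 0, 1], ![1, 1, 0]]

theorem barycentric_facetPoint_self (k : Fin 4) :
    barycentric (fun i => (facetPoint k i : ℝ)) k = 0 := by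
  fin_cases k <;> norm_num [barycentric, facetPoint, Matrix.cons_val_two, Matrix.tail_cons,
    Matrix.head_cons]

theorem barycentric_facetPoint_pos {k j : Fin 4} (hj : j ≠ k) :
    0 < barycentric (fun i => (facetPoint k i : ℝ)) j := by
  fin_cases k <;> fin_cases j <;> norm_num [barycentric, facetPoint, Matrix.cons_val_two,
    Matrix.tail_cons, Matrix.head_cons] at *

end S₁

end

/-- the simplex `S₁ = conv((0,0,0),(2,0,0),(0,3,0),(0,0,6)) ⊆ ℝ³` has no
integer point in its interior, and each of its four facets contains an integer point in
its relative interior. -/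
theorem stmt7 (w : Fin 4 → (Fin 3 → ℝ))
    (hw : w = ![![0, 0, 0], ![2, 0, 0], ![0, 3, 0], ![0, 0, 6]]) :
    (∀ x ∈ interior (convexHull ℝ (Set.range w)), ¬ ∀ i, ∃ z : ℤ, x i = z) ∧
      (∀ k : Fin 4, ∃ x ∈ intrinsicInterior ℝ (convexHull ℝ (w '' {k}ᶜ)),
        ∀ i, ∃ z : ℤ, x i = z) := by
  obtain rfl : w = S₁.basis := hw
  refine ⟨fun x hx hint => ?_, fun k => ?_⟩
  · rw [AffineBasis.interior_convexHull] at hx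
    obtain ⟨j, hj⟩ := S₁.exists_barycentric_nonpos hint
    exact (hx j).not_ge (S₁.coord_basis j x ▸ hj)
  · refine ⟨fun i => (S₁.facetPoint k i : ℝ),
      S₁.basis.mem_intrinsicInterior_convexHull_image_compl ?_ fun j hj => ?_, fun i => ⟨_, rfl⟩⟩
    · rw [S₁.coord_basis, S₁.barycentric_facetPoint_self]
    · rw [S₁.coord_basis]
      exact S₁.barycentric_facetPoint_pos hj
end

section
/- The simplex S_4 = conv((0,0,0), (1,0,0), (2,4,0), (3,0,4)) ⊆ ℝ^3 contains no integer point in its interior. -/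
/-!
Each facet of `S₄` gives a linear inequality that is strict on the interior:
`z > 0`, `y > 0`, `4x > 2y + 3z` and `4x < 4 + y + 2z`. For an integer point the first two
give `y, z ≥ 1` and the last two `y + z < 4`, leaving `(y, z) ∈ {(1,1), (1,2), (2,1)}`, where
`4x` would lie in `(5, 7)`, `(8, 9)` or `(7, 8)` respectively.
-/

open Matrix Set

theorem StrongDual.lt_of_mem_interior {E : Type*} [AddCommGroup E] [TopologicalSpace E]
    [ContinuousAdd E] [Module ℝ E] [ContinuousSMul ℝ E] {f : StrongDual ℝ E} (hf : f ≠ 0)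
    {s : Set E} {c : ℝ} (hs : ∀ y ∈ s, f y ≤ c) {x : E} (hx : x ∈ interior s) : f x < c := by
  have hx' : x ∈ interior (f ⁻¹' Iic c) := interior_mono hs hx
  simpa [interior_Iic] using
    (f.isOpenMap_of_ne_zero hf).interior_preimage_subset_preimage_interior hx'

theorem dotProduct_lt_of_mem_interior_convexHull {ι : Type*} [Fintype ι] [DecidableEq ι]
    {w : ι → ℝ} (hw : w ≠ 0) {s : Set (ι → ℝ)} {c : ℝ} (hs : ∀ v ∈ s, w ⬝ᵥ v ≤ c)
    {x : ι → ℝ} (hx : x ∈ interior (convexHull ℝ s)) : w ⬝ᵥ x < c := by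
  let f : StrongDual ℝ (ι → ℝ) := LinearMap.toContinuousLinearMap (dotProductEquiv ℝ ι w)
  have hf : f ≠ 0 := by
    simpa [f] using (dotProductEquiv ℝ ι).map_ne_zero_iff.mpr hw
  refine StrongDual.lt_of_mem_interior hf (fun y hy => ?_) hx
  refine convexHull_min hs ?_ hy
  exact convex_halfSpace_le (dotProductEquiv ℝ ι w).isLinear c

/-- the simplex `S₄ = conv((0,0,0),(1,0,0),(2,4,0),(3,0,4)) ⊆ ℝ³`
contains no integer point in its interior. -/
theorem stmt9 :
    ∀ x ∈ interior (convexHull ℝ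
      ({![0, 0, 0], ![1, 0, 0], ![2, 4, 0], ![3, 0, 4]} : Set (Fin 3 → ℝ))),
      ¬ ∀ i, ∃ z : ℤ, x i = z := by
  intro x hx hx_int
  choose z hz using hx_int
  have facet (w : Fin 3 → ℝ) (c : ℝ) (hw : w ≠ 0) (h0 : w ⬝ᵥ ![0, 0, 0] ≤ c)
      (h1 : w ⬝ᵥ ![1, 0, 0] ≤ c) (h2 : w ⬝ᵥ ![2, 4, 0] ≤ c) (h3 : w ⬝ᵥ ![3, 0, 4] ≤ c) :
      w ⬝ᵥ x < c :=
    dotProduct_lt_of_mem_interior_convexHull hw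
      (by rintro v (rfl | rfl | rfl | rfl) <;> assumption) hx
  have h012 := facet ![0, 0, -1] 0
  have h013 := facet ![0, -1, 0] 0
  have h023 := facet ![-4, 2, 3] 0
  have h123 := facet ![4, -1, -2] 4
  -- `simp` also discharges the premises of `facet`: `w ≠ 0` and the four vertex inequalities.
  simp [dotProduct, Fin.sum_univ_three, hz] at h012 h013 h023 h123
  norm_cast at h023 h123
  omega
end
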